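/- Let H be a weak Hopf algebra and A a left H-module algebra. The map α : (A#H)#H* → End((A#H)_A) given by α((x#h)#φ)(y#g) = x(h₁·y) # h₂(φ⇀g) is a well-defined homomorphism of unital algebras, where A#H is regarded as a right A-module via right multiplication by elements a#1. -/
import Mathlib


open TensorProduct

/-- A weak Hopf algebra structure on a `k`-algebra `H` (Böhm–Nill–Szlachányi axioms). -/
structure WeakHopfAlgebra (k : Type*) [Field k] (H : Type*) [Ring H] [Algebra k H] where
  Δ : H →ₗ[k] H ⊗[k] H
  ε : H →ₗ[k] k
  S : H →ₗ[k] H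
  /-- Δ is multiplicative -/
  Δ_mul : ∀ h g : H, Δ (h * g) = Δ h * Δ g
  /-- coassociativity -/
  coassoc : ∀ h : H, (TensorProduct.assoc k H H H) ((Δ.rTensor H) (Δ h)) = (Δ.lTensor H) (Δ h)
  /-- counit axioms -/
  counit_left : ∀ h : H, (TensorProduct.lid k H) ((ε.rTensor H) (Δ h)) = h
  counit_right : ∀ h : H, (TensorProduct.rid k H) ((ε.lTensor H) (Δ h)) = h
  /-- weak multiplicativity of the counit -/
  weak_counit₁ : ∀ h g f : H,
    ε (h * g * f) = (LinearMap.mul' k k)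
      ((TensorProduct.map (ε ∘ₗ LinearMap.mulLeft k h) (ε ∘ₗ LinearMap.mulRight k f)) (Δ g))
  weak_counit₂ : ∀ h g f : H,
    ε (h * g * f) = (LinearMap.mul' k k)
      ((TensorProduct.map (ε ∘ₗ LinearMap.mulRight k f) (ε ∘ₗ LinearMap.mulLeft k h))
        ((TensorProduct.comm k H H) (Δ g)))
  /-- weak comultiplicativity of the unit -/
  weak_unit₁ : (Δ.rTensor H) (Δ 1) =
    (Δ 1 ⊗ₜ[k] (1 : H)) * ((TensorProduct.assoc k H H H).symm ((1 : H) ⊗ₜ[k] Δ 1))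
  weak_unit₂ : (Δ.rTensor H) (Δ 1) =
    ((TensorProduct.assoc k H H H).symm ((1 : H) ⊗ₜ[k] Δ 1)) * (Δ 1 ⊗ₜ[k] (1 : H))
  /-- antipode axioms: h₁S(h₂) = ε_t(h), S(h₁)h₂ = ε_s(h), S(h₁)h₂S(h₃) = S(h) -/
  antipode_right : ∀ h : H, (LinearMap.mul' k H) ((S.lTensor H) (Δ h)) =
    (TensorProduct.lid k H) ((ε.rTensor H) (Δ 1 * (h ⊗ₜ[k] 1)))
  antipode_left : ∀ h : H, (LinearMap.mul' k H) ((S.rTensor H) (Δ h)) =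
    (TensorProduct.rid k H) ((ε.lTensor H) (((1 : H) ⊗ₜ[k] h) * Δ 1))
  antipode_mid : ∀ h : H, (LinearMap.mul' k H)
      ((LinearMap.lTensor H ((LinearMap.mul' k H) ∘ₗ (S.lTensor H)))
        ((S.rTensor (H ⊗[k] H)) ((Δ.lTensor H) (Δ h)))) = S h

namespace WeakHopfAlgebra

variable {k : Type*} [Field k] {H : Type*} [Ring H] [Algebra k H]

/-- the target counital map ε_t(h) = (ε⊗id)(Δ(1)(h⊗1)) -/
noncomputable def εtL (W : WeakHopfAlgebra k H) : H →ₗ[k] H :=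
  (TensorProduct.lid k H).toLinearMap ∘ₗ W.ε.rTensor H ∘ₗ
    LinearMap.mulLeft k (W.Δ 1) ∘ₗ ((TensorProduct.mk k H H).flip 1)

/-- the source counital map ε_s(h) = (id⊗ε)((1⊗h)Δ(1)) -/
noncomputable def εsL (W : WeakHopfAlgebra k H) : H →ₗ[k] H :=
  (TensorProduct.rid k H).toLinearMap ∘ₗ W.ε.lTensor H ∘ₗ
    LinearMap.mulRight k (W.Δ 1) ∘ₗ (TensorProduct.mk k H H 1)

end WeakHopfAlgebra
namespace WeakHopfAlgebra

variable {k : Type*} [Field k] {H : Type*} [Ring H] [Algebra k H]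
variable {A : Type*} [Ring A] [Algebra k A]

/-- A left `H`-module algebra structure on `A`: an `H`-module action `act` such that
`h·(xy) = (h₁·x)(h₂·y)` and `h·1 = ε_t(h)·1`. -/
structure ModuleAlgebra (W : WeakHopfAlgebra k H) (A : Type*) [Ring A] [Algebra k A] where
  act : H →ₗ[k] A →ₗ[k] A
  act_one : ∀ x : A, act 1 x = x
  act_mul : ∀ (h g : H) (x : A), act (h * g) x = act h (act g x)
  /-- h·(xy) = (h₁·x)(h₂·y) -/
  act_algebra : ∀ (h : H) (x y : A), act h (x * y) =
    (LinearMap.mul' k A) ((TensorProduct.map (act.flip x) (act.flip y)) (W.Δ h))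
  /-- h·1 = ε_t(h)·1 -/
  act_unit : ∀ h : H, act h 1 = act (W.εtL h) 1

variable (W : WeakHopfAlgebra k H)

/-- The relations defining `A ⊗_{H_t} H` inside `A ⊗_k H` : `x·z ⊗ h - x ⊗ zh`
for `z ∈ H_t`, where `x·z = x(z·1)`. -/
noncomputable def smashRel (M : ModuleAlgebra W A) : Submodule k (A ⊗[k] H) :=
  Submodule.span k {u | ∃ (x : A) (z h : H), W.εtL z = z ∧
    u = (x * M.act z 1) ⊗ₜ[k] h - x ⊗ₜ[k] (z * h)}

/-- The underlying vector space of the smash product `A # H = A ⊗_{H_t} H`. -/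
noncomputable def Smash (M : ModuleAlgebra W A) := (A ⊗[k] H) ⧸ smashRel W M

noncomputable instance (M : ModuleAlgebra W A) : AddCommGroup (Smash W M) :=
  inferInstanceAs (AddCommGroup ((A ⊗[k] H) ⧸ smashRel W M))

noncomputable instance (M : ModuleAlgebra W A) : Module k (Smash W M) :=
  inferInstanceAs (Module k ((A ⊗[k] H) ⧸ smashRel W M))

/-- The class `x # h` of `x ⊗ h` in the smash product. -/
noncomputable def smashMk (M : ModuleAlgebra W A) : A ⊗[k] H →ₗ[k] Smash W M :=
  (smashRel W M).mkQ

/-- The map `(x ⊗ h) ⊗ (y ⊗ g) ↦ x(h₁·y) ⊗ h₂g` on `(A ⊗ H) ⊗ (A ⊗ H)`. -/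
noncomputable def smashMulAux (M : ModuleAlgebra W A) :
    (A ⊗[k] H) ⊗[k] (A ⊗[k] H) →ₗ[k] A ⊗[k] H :=
  LinearMap.rTensor H (LinearMap.mul' k A) ∘ₗ
  (TensorProduct.assoc k A A H).symm.toLinearMap ∘ₗ
  LinearMap.lTensor A (LinearMap.rTensor H (TensorProduct.lift M.act)) ∘ₗ
  LinearMap.lTensor A (TensorProduct.assoc k H A H).symm.toLinearMap ∘ₗ
  (TensorProduct.assoc k A H (A ⊗[k] H)).toLinearMap ∘ₗ
  (TensorProduct.tensorTensorTensorComm k A A H H).toLinearMap ∘ₗ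
  LinearMap.lTensor (A ⊗[k] A) (LinearMap.lTensor H (LinearMap.mul' k H)) ∘ₗ
  LinearMap.lTensor (A ⊗[k] A) (TensorProduct.assoc k H H H).toLinearMap ∘ₗ
  LinearMap.lTensor (A ⊗[k] A) (LinearMap.rTensor H W.Δ) ∘ₗ
  (TensorProduct.tensorTensorTensorComm k A H A H).toLinearMap

/-- `μ` is the multiplication of the smash product `A # H`:
`(x#h)(y#g) = x(h₁·y) # h₂g`. -/
noncomputable def IsSmashMul (M : ModuleAlgebra W A)
    (μ : Smash W M →ₗ[k] Smash W M →ₗ[k] Smash W M) : Prop :=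
  ∀ u v : A ⊗[k] H, μ (smashMk W M u) (smashMk W M v) =
    smashMk W M (smashMulAux W M (u ⊗ₜ[k] v))

/-- The unit `1 # 1` of the smash product. -/
noncomputable def smashOne (M : ModuleAlgebra W A) : Smash W M :=
  smashMk W M ((1 : A) ⊗ₜ[k] (1 : H))

/-- The left action `φ ⇀ h = h₁⟨φ, h₂⟩` of `H^*` on `H`. -/
noncomputable def coact (φ : Module.Dual k H) : H →ₗ[k] H :=
  (TensorProduct.rid k H).toLinearMap ∘ₗ (LinearMap.lTensor H φ) ∘ₗ W.Δ

/-- The convolution product on `H^*`: `⟨φψ, h⟩ = ⟨φ ⊗ ψ, Δ h⟩`. -/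
noncomputable def dmul (φ ψ : Module.Dual k H) : Module.Dual k H :=
  (LinearMap.mul' k k) ∘ₗ (TensorProduct.map φ ψ) ∘ₗ W.Δ

/-- The target counital map of the dual weak Hopf algebra `H^*`:
`⟨ε_t^*(φ), h⟩ = Σ ε(1₁h) φ(1₂)`. -/
noncomputable def dualEt (φ : Module.Dual k H) : Module.Dual k H :=
  (LinearMap.mul' k k) ∘ₗ (TensorProduct.map W.ε φ) ∘ₗ
    LinearMap.mulLeft k (W.Δ 1) ∘ₗ ((TensorProduct.mk k H H).flip 1)

/-- The comultiplication of `H^*`, dual to the multiplication of `H`. -/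
noncomputable def comulD (_W : WeakHopfAlgebra k H) [FiniteDimensional k H] :
    Module.Dual k H →ₗ[k] Module.Dual k H ⊗[k] Module.Dual k H :=
  (TensorProduct.dualDistribEquiv k H H).symm.toLinearMap ∘ₗ (LinearMap.mul' k H).dualMap

/-- The convolution product on `H^*` as a bilinear map. -/
noncomputable def dmulL : Module.Dual k H →ₗ[k] Module.Dual k H →ₗ[k] Module.Dual k H :=
  LinearMap.mk₂ k (dmul W)
    (by intros; ext; simp [dmul, TensorProduct.map_add_left])
    (by intros; ext; simp [dmul, TensorProduct.map_smul_left])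
    (by intros; ext; simp [dmul, TensorProduct.map_add_right])
    (by intros; ext; simp [dmul, TensorProduct.map_smul_right])

/-- The action `φ ⇀ h` as a bilinear map. -/
noncomputable def coactL : Module.Dual k H →ₗ[k] H →ₗ[k] H :=
  LinearMap.mk₂ k (fun φ h => coact W φ h)
    (fun φ φ' h => by simp [coact, LinearMap.lTensor_add])
    (fun c φ h => by simp [coact, LinearMap.lTensor_smul])
    (fun φ h h' => map_add _ _ _)
    (fun c φ h => map_smul _ _ _)

end WeakHopfAlgebra
namespace WeakHopfAlgebra

variable {k : Type*} [Field k] {H : Type*} [Ring H] [Algebra k H]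
variable {A : Type*} [Ring A] [Algebra k A]
variable (W : WeakHopfAlgebra k H) (M : ModuleAlgebra W A)

/-- The relations defining `(A#H) ⊗_{(H^*)_t} H^*` inside `(A#H) ⊗_k H^*`:
`u·ξ ⊗ φ - u ⊗ ξφ` for `ξ ∈ (H^*)_t`, where `u·ξ = u(ξ·1)`. -/
noncomputable def smashRel2 (μ : Smash W M →ₗ[k] Smash W M →ₗ[k] Smash W M) :
    Submodule k (Smash W M ⊗[k] (H →ₗ[k] k)) :=
  Submodule.span k {w | ∃ (u : Smash W M) (ξ φ : Module.Dual k H), dualEt W ξ = ξ ∧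
    w = (μ u (smashMk W M ((1 : A) ⊗ₜ[k] coact W ξ 1))) ⊗ₜ[k] φ - u ⊗ₜ[k] dmul W ξ φ}

/-- The underlying vector space of the iterated smash product `(A#H)#H^*`. -/
noncomputable def Smash2 (μ : Smash W M →ₗ[k] Smash W M →ₗ[k] Smash W M) :=
  (Smash W M ⊗[k] (H →ₗ[k] k)) ⧸ smashRel2 W M μ

noncomputable instance (μ : Smash W M →ₗ[k] Smash W M →ₗ[k] Smash W M) :
    AddCommGroup (Smash2 W M μ) :=
  inferInstanceAs (AddCommGroup ((Smash W M ⊗[k] (H →ₗ[k] k)) ⧸ smashRel2 W M μ))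

noncomputable instance (μ : Smash W M →ₗ[k] Smash W M →ₗ[k] Smash W M) :
    Module k (Smash2 W M μ) :=
  inferInstanceAs (Module k ((Smash W M ⊗[k] (H →ₗ[k] k)) ⧸ smashRel2 W M μ))

/-- The class `u # φ` in the iterated smash product. -/
noncomputable def smashMk2 (μ : Smash W M →ₗ[k] Smash W M →ₗ[k] Smash W M) :
    Smash W M ⊗[k] Module.Dual k H →ₗ[k] Smash2 W M μ :=
  (smashRel2 W M μ).mkQ

/-- `μ₂` is the multiplication of `(A#H)#H^*`: `(u#φ)(v#ψ) = u(φ₁·v) # φ₂ψ`. -/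
noncomputable def IsSmashMul2 [FiniteDimensional k H]
    (μ : Smash W M →ₗ[k] Smash W M →ₗ[k] Smash W M)
    (Φ : Module.Dual k H →ₗ[k] Smash W M →ₗ[k] Smash W M)
    (μ₂ : Smash2 W M μ →ₗ[k] Smash2 W M μ →ₗ[k] Smash2 W M μ) : Prop :=
  ∀ (u v : Smash W M) (φ ψ : Module.Dual k H),
    μ₂ (smashMk2 W M μ (u ⊗ₜ[k] φ)) (smashMk2 W M μ (v ⊗ₜ[k] ψ)) =
      smashMk2 W M μ
        ((TensorProduct.map ((μ u) ∘ₗ (Φ.flip v)) ((dmulL W).flip ψ)) (comulD W φ))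

/-- `T` commutes with the right `A`-action on `A#H` given by right multiplication
by elements `w # 1`. -/
noncomputable def RightALinear (μ : Smash W M →ₗ[k] Smash W M →ₗ[k] Smash W M)
    (T : Smash W M →ₗ[k] Smash W M) : Prop :=
  ∀ (s : Smash W M) (w : A),
    T (μ s (smashMk W M (w ⊗ₜ[k] (1 : H)))) = μ (T s) (smashMk W M (w ⊗ₜ[k] (1 : H)))

end WeakHopfAlgebra
namespace WeakHopfAlgebra

variable {k : Type*} [Field k] {H : Type*} [Ring H] [Algebra k H]
variable {A : Type*} [Ring A] [Algebra k A]

/-- A chosen finite representation of `Δ x` as a sum of pure tensors. -/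
noncomputable def rep (W : WeakHopfAlgebra k H) (x : H) : Finset (H × H) :=
  (TensorProduct.exists_finset (W.Δ x)).choose

lemma rep_spec (W : WeakHopfAlgebra k H) (x : H) :
    W.Δ x = ∑ p ∈ W.rep x, p.1 ⊗ₜ[k] p.2 :=
  (TensorProduct.exists_finset (W.Δ x)).choose_spec

lemma Δ_eq_one_mul (W : WeakHopfAlgebra k H) (h : H) : W.Δ h = W.Δ 1 * W.Δ h := by
  rw [← W.Δ_mul, one_mul]

lemma εtL_apply (W : WeakHopfAlgebra k H) (x : H) :
    W.εtL x = ∑ p ∈ W.rep 1, W.ε (p.1 * x) • p.2 := by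
  rw [εtL]
  simp only [LinearMap.coe_comp, Function.comp_apply, LinearEquiv.coe_coe,
    LinearMap.flip_apply, TensorProduct.mk_apply, LinearMap.mulLeft_apply]
  rw [W.rep_spec 1, Finset.sum_mul]
  simp [Algebra.TensorProduct.tmul_mul_tmul, TensorProduct.lid_tmul]

lemma counit_right' (W : WeakHopfAlgebra k H) (x : H) :
    ∑ p ∈ W.rep x, W.ε p.2 • p.1 = x := by
  have := W.counit_right x
  rw [W.rep_spec x] at this
  simpa [TensorProduct.rid_tmul] using this

lemma counit_left' (W : WeakHopfAlgebra k H) (x : H) :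
    ∑ p ∈ W.rep x, W.ε p.1 • p.2 = x := by
  have := W.counit_left x
  rw [W.rep_spec x] at this
  simpa [TensorProduct.lid_tmul] using this

set_option synthInstance.maxHeartbeats 400000 in
lemma wu2_rep (W : WeakHopfAlgebra k H) :
    (W.Δ.rTensor H) (W.Δ 1) =
      ∑ q ∈ W.rep 1, ∑ p ∈ W.rep 1, (p.1 ⊗ₜ[k] (q.1 * p.2)) ⊗ₜ[k] q.2 := by
  rw [W.weak_unit₂, W.rep_spec 1, TensorProduct.tmul_sum, TensorProduct.sum_tmul,
    map_sum, Finset.sum_mul]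
  refine Finset.sum_congr rfl fun q _ => ?_
  rw [Finset.mul_sum]
  refine Finset.sum_congr rfl fun p _ => ?_
  simp [TensorProduct.assoc_symm_tmul, Algebra.TensorProduct.tmul_mul_tmul]

end WeakHopfAlgebra
namespace WeakHopfAlgebra

variable {k : Type*} [Field k] {H : Type*} [Ring H] [Algebra k H]
variable {A : Type*} [Ring A] [Algebra k A]

set_option synthInstance.maxHeartbeats 1000000
set_option maxHeartbeats 1000000

lemma sum_rot {β γ : Type*} [AddCommMonoid β] (s t u : Finset γ) (f : γ → γ → γ → β) :
    ∑ q ∈ s, ∑ p ∈ t, ∑ r ∈ u, f q p r = ∑ p ∈ t, ∑ r ∈ u, ∑ q ∈ s, f q p r := by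
  rw [Finset.sum_comm]
  exact Finset.sum_congr rfl fun p _ => Finset.sum_comm

lemma lTensor_εtL_Δ (W : WeakHopfAlgebra k H) (h : H) :
    LinearMap.lTensor H W.εtL (W.Δ h) = W.Δ 1 * (h ⊗ₜ[k] (1 : H)) := by
  have hΔ : W.Δ h = ∑ p ∈ W.rep 1, ∑ r ∈ W.rep h, (p.1 * r.1) ⊗ₜ[k] (p.2 * r.2) := by
    conv_lhs => rw [Δ_eq_one_mul W h]
    rw [W.rep_spec 1, W.rep_spec h, Finset.sum_mul]
    refine Finset.sum_congr rfl fun p _ => ?_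
    rw [Finset.mul_sum]
    exact Finset.sum_congr rfl fun r _ => by
      simp [Algebra.TensorProduct.tmul_mul_tmul]
  have L : LinearMap.lTensor H W.εtL (W.Δ h)
      = ∑ p ∈ W.rep 1, ∑ r ∈ W.rep h, ∑ q ∈ W.rep 1,
          W.ε (q.1 * (p.2 * r.2)) • ((p.1 * r.1) ⊗ₜ[k] q.2) := by
    rw [hΔ]
    simp only [map_sum, LinearMap.lTensor_tmul]
    refine Finset.sum_congr rfl fun p _ => Finset.sum_congr rfl fun r _ => ?_
    rw [εtL_apply, TensorProduct.tmul_sum]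
    exact Finset.sum_congr rfl fun q _ => by rw [TensorProduct.tmul_smul]
  have h1 : (W.Δ.rTensor H) (W.Δ 1) = ∑ q ∈ W.rep 1, (W.Δ q.1) ⊗ₜ[k] q.2 := by
    conv_lhs => rw [W.rep_spec 1]
    rw [map_sum]
    exact Finset.sum_congr rfl fun q _ => by rw [LinearMap.rTensor_tmul]
  have h2 := h1.symm.trans (wu2_rep W)
  have e3 : ∑ q ∈ W.rep 1, (W.Δ q.1 * W.Δ h) ⊗ₜ[k] q.2
      = ∑ q ∈ W.rep 1, ∑ p ∈ W.rep 1, ((p.1 ⊗ₜ[k] (q.1 * p.2)) * W.Δ h) ⊗ₜ[k] q.2 := by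
    have := congrArg (LinearMap.rTensor H (LinearMap.mulRight k (W.Δ h))) h2
    simpa [map_sum, LinearMap.rTensor_tmul] using this
  have Rt : W.Δ 1 * (h ⊗ₜ[k] (1 : H))
      = ∑ q ∈ W.rep 1, ∑ p ∈ W.rep 1, ∑ r ∈ W.rep h,
          W.ε (q.1 * p.2 * r.2) • ((p.1 * r.1) ⊗ₜ[k] q.2) := by
    have e1 : W.Δ 1 * (h ⊗ₜ[k] (1 : H)) = ∑ q ∈ W.rep 1, (q.1 * h) ⊗ₜ[k] q.2 := by
      rw [W.rep_spec 1, Finset.sum_mul]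
      exact Finset.sum_congr rfl fun q _ => by
        simp [Algebra.TensorProduct.tmul_mul_tmul]
    have e2 : ∀ a : H, a * h
        = (TensorProduct.rid k H) ((W.ε.lTensor H) (W.Δ a * W.Δ h)) := by
      intro a; rw [← W.Δ_mul]; exact (W.counit_right _).symm
    rw [e1, Finset.sum_congr rfl (fun q _ => by rw [e2 q.1])]
    have e5 := congrArg
      (LinearMap.rTensor H ((TensorProduct.rid k H).toLinearMap ∘ₗ (W.ε.lTensor H))) e3
    simp only [map_sum, LinearMap.rTensor_tmul, LinearMap.coe_comp, Function.comp_apply,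
      LinearEquiv.coe_coe] at e5
    rw [e5]
    refine Finset.sum_congr rfl fun q _ => Finset.sum_congr rfl fun p _ => ?_
    rw [W.rep_spec h, Finset.mul_sum, map_sum, map_sum, TensorProduct.sum_tmul]
    refine Finset.sum_congr rfl fun r _ => ?_
    simp [Algebra.TensorProduct.tmul_mul_tmul, TensorProduct.rid_tmul,
      TensorProduct.smul_tmul', mul_assoc]
  rw [L, Rt]
  conv_rhs => rw [sum_rot (W.rep 1) (W.rep 1) (W.rep h)
    (fun q p r => W.ε (q.1 * p.2 * r.2) • ((p.1 * r.1) ⊗ₜ[k] q.2))]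
  simp [mul_assoc]

lemma lTensor_εtL_Δ_one (W : WeakHopfAlgebra k H) :
    LinearMap.lTensor H W.εtL (W.Δ 1) = W.Δ 1 := by
  have := lTensor_εtL_Δ W 1
  rwa [show ((1 : H) ⊗ₜ[k] (1 : H)) = (1 : H ⊗[k] H) from rfl, mul_one] at this

lemma εtL_idem (W : WeakHopfAlgebra k H) (x : H) : W.εtL (W.εtL x) = W.εtL x := by
  set F : H ⊗[k] H →ₗ[k] H :=
    (TensorProduct.lid k H).toLinearMap ∘ₗ ((W.ε ∘ₗ LinearMap.mulRight k x).rTensor H) with hF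
  have hF1 : F (W.Δ 1) = W.εtL x := by
    rw [W.rep_spec 1, map_sum, εtL_apply]
    exact Finset.sum_congr rfl fun p _ => by
      simp [hF, LinearMap.rTensor_tmul, TensorProduct.lid_tmul]
  have hF2 : F (LinearMap.lTensor H W.εtL (W.Δ 1)) = W.εtL (W.εtL x) := by
    rw [W.rep_spec 1, map_sum, map_sum]
    rw [show W.εtL (W.εtL x) = W.εtL (∑ p ∈ W.rep 1, W.ε (p.1 * x) • p.2) by rw [← εtL_apply]]
    rw [map_sum]
    exact Finset.sum_congr rfl fun p _ => by
      simp [hF, LinearMap.lTensor_tmul, LinearMap.rTensor_tmul, TensorProduct.lid_tmul]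
  calc W.εtL (W.εtL x) = F (LinearMap.lTensor H W.εtL (W.Δ 1)) := hF2.symm
    _ = F (W.Δ 1) := by rw [lTensor_εtL_Δ_one]
    _ = W.εtL x := hF1

variable (W : WeakHopfAlgebra k H) (M : ModuleAlgebra W A)

lemma smashMk_rel {z : H} (hz : W.εtL z = z) (x : A) (h : H) :
    smashMk W M ((x * M.act z 1) ⊗ₜ[k] h) = smashMk W M (x ⊗ₜ[k] (z * h)) := by
  exact (Submodule.Quotient.eq _).2 (Submodule.subset_span ⟨x, z, h, hz, rfl⟩)

lemma smashMk_relT (y : A) (h : H) {t : H ⊗[k] H}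
    (ht : LinearMap.lTensor H W.εtL t = t) :
    smashMk W M ((TensorProduct.map (M.act.flip y) (LinearMap.mulRight k h)) t)
      = smashMk W M ((LinearMap.mul' k A
          ((TensorProduct.map (M.act.flip y) (M.act.flip 1)) t)) ⊗ₜ[k] h) := by
  have key : ∀ s : H ⊗[k] H,
      smashMk W M ((TensorProduct.map (M.act.flip y) (LinearMap.mulRight k h))
          (LinearMap.lTensor H W.εtL s))
        = smashMk W M ((LinearMap.mul' k A
            ((TensorProduct.map (M.act.flip y) (M.act.flip 1))
              (LinearMap.lTensor H W.εtL s))) ⊗ₜ[k] h) := by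
    intro s
    induction s using TensorProduct.induction_on with
    | zero => simp
    | tmul a b =>
        simp only [LinearMap.lTensor_tmul, TensorProduct.map_tmul, LinearMap.flip_apply,
          LinearMap.mulRight_apply, LinearMap.mul'_apply]
        exact (smashMk_rel W M (εtL_idem W b) (M.act a y) h).symm
    | add u v hu hv =>
        simp only [map_add, TensorProduct.add_tmul, hu, hv]
  conv_lhs => rw [← ht]
  conv_rhs => rw [← ht]
  exact key t

lemma oneMul_mk (y : A) (h : H) :
    smashMk W M ((TensorProduct.map (M.act.flip y) (LinearMap.mulRight k h)) (W.Δ 1))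
      = smashMk W M (y ⊗ₜ[k] h) := by
  rw [smashMk_relT W M y h (lTensor_εtL_Δ_one W)]
  have : LinearMap.mul' k A ((TensorProduct.map (M.act.flip y) (M.act.flip 1)) (W.Δ 1)) = y := by
    have h1 := (M.act_algebra 1 y 1).symm
    rw [h1, M.act_one, mul_one]
  rw [this]

lemma smashMulAux_tmul (x : A) (h : H) (y : A) (g : H) :
    smashMulAux W M ((x ⊗ₜ[k] h) ⊗ₜ[k] (y ⊗ₜ[k] g)) =
      TensorProduct.map (LinearMap.mulLeft k x ∘ₗ M.act.flip y) (LinearMap.mulRight k g)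
        (W.Δ h) := by
  rw [smashMulAux]
  simp only [LinearMap.coe_comp, Function.comp_apply, LinearEquiv.coe_coe,
    TensorProduct.tensorTensorTensorComm_tmul, LinearMap.lTensor_tmul, LinearMap.rTensor_tmul]
  rw [W.rep_spec h]
  simp [map_sum, TensorProduct.sum_tmul, TensorProduct.tmul_sum, TensorProduct.assoc_tmul,
    TensorProduct.assoc_symm_tmul, TensorProduct.lift.tmul, LinearMap.mul'_apply]

lemma coact_apply (φ : Module.Dual k H) (x : H) :
    coact W φ x = ∑ p ∈ W.rep x, φ p.2 • p.1 := by
  rw [coact]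
  simp only [LinearMap.coe_comp, Function.comp_apply, LinearEquiv.coe_coe]
  rw [W.rep_spec x, map_sum, map_sum]
  exact Finset.sum_congr rfl fun p _ => by
    simp [LinearMap.lTensor_tmul, TensorProduct.rid_tmul]

end WeakHopfAlgebra
namespace WeakHopfAlgebra

variable {k : Type*} [Field k] {H : Type*} [Ring H] [Algebra k H]
variable {A : Type*} [Ring A] [Algebra k A]

set_option synthInstance.maxHeartbeats 1000000
set_option maxHeartbeats 1000000

lemma coassoc_rep {V : Type*} [AddCommGroup V] [Module k V] (W : WeakHopfAlgebra k H)
    (G : H ⊗[k] (H ⊗[k] H) →ₗ[k] V) (x : H) :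
    ∑ p ∈ W.rep x, ∑ q ∈ W.rep p.1, G (q.1 ⊗ₜ[k] (q.2 ⊗ₜ[k] p.2))
      = ∑ p ∈ W.rep x, G (p.1 ⊗ₜ[k] W.Δ p.2) := by
  have h0 := congrArg G (W.coassoc x)
  have hL : G ((TensorProduct.assoc k H H H) ((W.Δ.rTensor H) (W.Δ x)))
      = ∑ p ∈ W.rep x, ∑ q ∈ W.rep p.1, G (q.1 ⊗ₜ[k] (q.2 ⊗ₜ[k] p.2)) := by
    conv_lhs => rw [W.rep_spec x]
    rw [map_sum, map_sum, map_sum]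
    refine Finset.sum_congr rfl fun p _ => ?_
    rw [LinearMap.rTensor_tmul, W.rep_spec p.1, TensorProduct.sum_tmul, map_sum, map_sum]
    exact Finset.sum_congr rfl fun q _ => by rw [TensorProduct.assoc_tmul]
  have hR : G ((W.Δ.lTensor H) (W.Δ x)) = ∑ p ∈ W.rep x, G (p.1 ⊗ₜ[k] W.Δ p.2) := by
    conv_lhs => rw [W.rep_spec x]
    rw [map_sum, map_sum]
    exact Finset.sum_congr rfl fun p _ => by rw [LinearMap.lTensor_tmul]
  rw [← hL, ← hR, h0]

lemma dmul_apply (W : WeakHopfAlgebra k H) (φ ψ : Module.Dual k H) (x : H) :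
    dmul W φ ψ x = ∑ p ∈ W.rep x, φ p.1 * ψ p.2 := by
  rw [dmul]
  simp only [LinearMap.coe_comp, Function.comp_apply]
  rw [W.rep_spec x, map_sum, map_sum]
  exact Finset.sum_congr rfl fun p _ => by
    simp [TensorProduct.map_tmul, LinearMap.mul'_apply]

lemma dualEt_eq (W : WeakHopfAlgebra k H) (ξ : Module.Dual k H) :
    dualEt W ξ = ξ ∘ₗ W.εtL := by
  apply LinearMap.ext; intro x
  rw [dualEt]
  simp only [LinearMap.coe_comp, Function.comp_apply, LinearMap.flip_apply,
    TensorProduct.mk_apply, LinearMap.mulLeft_apply]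
  rw [εtL_apply, map_sum, W.rep_spec 1, Finset.sum_mul, map_sum, map_sum]
  refine Finset.sum_congr rfl fun p _ => by
    simp [Algebra.TensorProduct.tmul_mul_tmul, TensorProduct.map_tmul,
      LinearMap.mul'_apply, smul_eq_mul]

lemma coact_eq_mulLeft (W : WeakHopfAlgebra k H) {ξ : Module.Dual k H}
    (hξ : dualEt W ξ = ξ) : coact W ξ = LinearMap.mulLeft k (coact W ξ 1) := by
  have hc : ∀ u : H, ξ (W.εtL u) = ξ u := by
    intro u
    conv_rhs => rw [← hξ]
    rw [dualEt_eq]; rfl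
  apply LinearMap.ext; intro x
  have h1 := congrArg ((TensorProduct.rid k H).toLinearMap ∘ₗ LinearMap.lTensor H ξ)
    (lTensor_εtL_Δ W x)
  have hLL : ((TensorProduct.rid k H).toLinearMap ∘ₗ LinearMap.lTensor H ξ)
      (LinearMap.lTensor H W.εtL (W.Δ x)) = coact W ξ x := by
    rw [W.rep_spec x, map_sum, map_sum, coact_apply]
    refine Finset.sum_congr rfl fun p _ => ?_
    simp [LinearMap.lTensor_tmul, TensorProduct.rid_tmul, hc]
  have hRR : ((TensorProduct.rid k H).toLinearMap ∘ₗ LinearMap.lTensor H ξ)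
      (W.Δ 1 * (x ⊗ₜ[k] (1 : H))) = LinearMap.mulLeft k (coact W ξ 1) x := by
    rw [W.rep_spec 1, Finset.sum_mul, map_sum, LinearMap.mulLeft_apply, coact_apply,
      Finset.sum_mul]
    refine Finset.sum_congr rfl fun p _ => ?_
    simp [Algebra.TensorProduct.tmul_mul_tmul, LinearMap.lTensor_tmul,
      TensorProduct.rid_tmul, smul_mul_assoc]
  rw [← hLL, h1, hRR]

lemma comm_one_coact (W : WeakHopfAlgebra k H) (ξ : Module.Dual k H) :
    ((1 : H) ⊗ₜ[k] coact W ξ 1) * W.Δ 1 = W.Δ 1 * ((1 : H) ⊗ₜ[k] coact W ξ 1) := by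
  have hw := (W.weak_unit₁).symm.trans W.weak_unit₂
  have h4 := congrArg ((TensorProduct.rid k (H ⊗[k] H)).toLinearMap ∘ₗ
    LinearMap.lTensor (H ⊗[k] H) ξ) hw
  have hL : ((TensorProduct.rid k (H ⊗[k] H)).toLinearMap ∘ₗ
      LinearMap.lTensor (H ⊗[k] H) ξ)
      ((W.Δ 1 ⊗ₜ[k] (1 : H)) * ((TensorProduct.assoc k H H H).symm ((1 : H) ⊗ₜ[k] W.Δ 1)))
      = W.Δ 1 * ((1 : H) ⊗ₜ[k] coact W ξ 1) := by
    rw [W.rep_spec 1, coact_apply]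
    rw [TensorProduct.tmul_sum, map_sum, TensorProduct.sum_tmul, Finset.sum_mul, map_sum]
    rw [show (∑ p ∈ W.rep 1, p.1 ⊗ₜ[k] p.2) * ((1:H) ⊗ₜ[k] ∑ p ∈ W.rep 1, ξ p.2 • p.1)
      = ∑ p ∈ W.rep 1, ∑ q ∈ W.rep 1, ξ q.2 • (p.1 ⊗ₜ[k] (p.2 * q.1)) by
        rw [Finset.sum_mul]
        refine Finset.sum_congr rfl fun p _ => ?_
        rw [TensorProduct.tmul_sum, Finset.mul_sum]
        refine Finset.sum_congr rfl fun q _ => ?_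
        rw [TensorProduct.tmul_smul, mul_smul_comm]
        simp [Algebra.TensorProduct.tmul_mul_tmul]]
    refine Finset.sum_congr rfl fun p _ => ?_
    rw [Finset.mul_sum, map_sum]
    refine Finset.sum_congr rfl fun q _ => ?_
    simp [Algebra.TensorProduct.tmul_mul_tmul, TensorProduct.assoc_symm_tmul,
      LinearMap.lTensor_tmul, TensorProduct.rid_tmul]
  have hR : ((TensorProduct.rid k (H ⊗[k] H)).toLinearMap ∘ₗ
      LinearMap.lTensor (H ⊗[k] H) ξ)
      (((TensorProduct.assoc k H H H).symm ((1 : H) ⊗ₜ[k] W.Δ 1)) * (W.Δ 1 ⊗ₜ[k] (1 : H)))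
      = ((1 : H) ⊗ₜ[k] coact W ξ 1) * W.Δ 1 := by
    rw [W.rep_spec 1, coact_apply]
    rw [TensorProduct.tmul_sum, map_sum, TensorProduct.sum_tmul, Finset.sum_mul, map_sum]
    rw [show ((1 : H) ⊗ₜ[k] ∑ p ∈ W.rep 1, ξ p.2 • p.1) * (∑ p ∈ W.rep 1, p.1 ⊗ₜ[k] p.2)
        = ∑ q ∈ W.rep 1, ∑ p ∈ W.rep 1, ξ q.2 • (p.1 ⊗ₜ[k] (q.1 * p.2)) by
      rw [TensorProduct.tmul_sum, Finset.sum_mul]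
      refine Finset.sum_congr rfl fun q _ => ?_
      rw [Finset.mul_sum]
      refine Finset.sum_congr rfl fun p _ => ?_
      rw [TensorProduct.tmul_smul, smul_mul_assoc]
      simp [Algebra.TensorProduct.tmul_mul_tmul]]
    refine Finset.sum_congr rfl fun q _ => ?_
    rw [Finset.mul_sum, map_sum]
    refine Finset.sum_congr rfl fun p _ => ?_
    simp [Algebra.TensorProduct.tmul_mul_tmul, TensorProduct.assoc_symm_tmul,
      LinearMap.lTensor_tmul, TensorProduct.rid_tmul]
  rw [← hL, h4, hR]

lemma Δ_coact_one (W : WeakHopfAlgebra k H) {ξ : Module.Dual k H}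
    (hξ : dualEt W ξ = ξ) :
    W.Δ (coact W ξ 1) = ((1 : H) ⊗ₜ[k] coact W ξ 1) * W.Δ 1 := by
  set G := LinearMap.lTensor H
    ((TensorProduct.rid k H).toLinearMap ∘ₗ LinearMap.lTensor H ξ) with hGdef
  have hrep := coassoc_rep W G 1
  have h1 : W.Δ (coact W ξ 1) = ∑ p ∈ W.rep 1, ∑ q ∈ W.rep p.1,
      G (q.1 ⊗ₜ[k] (q.2 ⊗ₜ[k] p.2)) := by
    rw [coact_apply, map_sum]
    refine Finset.sum_congr rfl fun p _ => ?_
    rw [map_smul, W.rep_spec p.1, Finset.smul_sum]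
    refine Finset.sum_congr rfl fun q _ => ?_
    simp [hGdef, LinearMap.lTensor_tmul, TensorProduct.rid_tmul, TensorProduct.tmul_smul]
  have h2 : ∑ p ∈ W.rep 1, G (p.1 ⊗ₜ[k] W.Δ p.2)
      = ((1 : H) ⊗ₜ[k] coact W ξ 1) * W.Δ 1 := by
    have hG : ∀ p : H × H, G (p.1 ⊗ₜ[k] W.Δ p.2) = p.1 ⊗ₜ[k] (coact W ξ 1 * p.2) := by
      intro p
      have hx : G (p.1 ⊗ₜ[k] W.Δ p.2) = p.1 ⊗ₜ[k] coact W ξ p.2 := by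
        simp [hGdef, coact, LinearMap.lTensor_tmul]
      rw [hx, coact_eq_mulLeft W hξ]
      simp [LinearMap.mulLeft_apply]
    rw [Finset.sum_congr rfl fun p _ => hG p]
    conv_rhs => rw [W.rep_spec 1]
    rw [Finset.mul_sum]
    exact Finset.sum_congr rfl fun p _ => by
      simp [Algebra.TensorProduct.tmul_mul_tmul]
  rw [h1, hrep]
  exact h2

lemma coact_dmul (W : WeakHopfAlgebra k H) (φ ψ : Module.Dual k H) :
    coact W (dmul W φ ψ) = coact W φ ∘ₗ coact W ψ := by
  apply LinearMap.ext; intro x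
  set G := (TensorProduct.rid k H).toLinearMap ∘ₗ
    LinearMap.lTensor H ((LinearMap.mul' k k) ∘ₗ TensorProduct.map φ ψ) with hGdef
  have hrep := coassoc_rep W G x
  have hR : ∑ p ∈ W.rep x, G (p.1 ⊗ₜ[k] W.Δ p.2) = coact W (dmul W φ ψ) x := by
    rw [coact_apply]
    refine Finset.sum_congr rfl fun p _ => ?_
    simp [hGdef, LinearMap.lTensor_tmul, TensorProduct.rid_tmul, dmul]
  have hL : ∑ p ∈ W.rep x, ∑ q ∈ W.rep p.1, G (q.1 ⊗ₜ[k] (q.2 ⊗ₜ[k] p.2))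
      = coact W φ (coact W ψ x) := by
    rw [coact_apply W ψ x, map_sum]
    refine Finset.sum_congr rfl fun p _ => ?_
    rw [map_smul, coact_apply, Finset.smul_sum]
    refine Finset.sum_congr rfl fun q _ => ?_
    simp [hGdef, LinearMap.lTensor_tmul, TensorProduct.rid_tmul, TensorProduct.map_tmul,
      LinearMap.mul'_apply, smul_smul, mul_comm]
  simp only [LinearMap.coe_comp, Function.comp_apply]
  rw [← hR, ← hrep, hL]

lemma coact_ε (W : WeakHopfAlgebra k H) : coact W W.ε = LinearMap.id := by
  apply LinearMap.ext; intro x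
  simpa [coact] using W.counit_right x

lemma comulD_eval [FiniteDimensional k H] (W : WeakHopfAlgebra k H)
    (φ : Module.Dual k H) (a b : H) :
    TensorProduct.dualDistrib k H H (comulD W φ) (a ⊗ₜ[k] b) = φ (a * b) := by
  have h0 : ∀ y : Module.Dual k H ⊗[k] Module.Dual k H,
      TensorProduct.dualDistrib k H H y = TensorProduct.dualDistribEquiv k H H y :=
    fun y => rfl
  rw [comulD]
  simp only [LinearMap.coe_comp, Function.comp_apply, LinearEquiv.coe_coe]
  rw [h0, LinearEquiv.apply_symm_apply]
  simp [LinearMap.dualMap_apply, LinearMap.mul'_apply]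

end WeakHopfAlgebra
namespace WeakHopfAlgebra

variable {k : Type*} [Field k] {H : Type*} [Ring H] [Algebra k H]
variable {A : Type*} [Ring A] [Algebra k A]

set_option synthInstance.maxHeartbeats 1000000
set_option maxHeartbeats 1000000

variable (W : WeakHopfAlgebra k H) (M : ModuleAlgebra W A)

lemma smashMk_surjective : Function.Surjective (smashMk W M) :=
  Submodule.mkQ_surjective _

lemma μ_mk (μ : Smash W M →ₗ[k] Smash W M →ₗ[k] Smash W M) (hμ : IsSmashMul W M μ)
    (x : A) (h : H) (y : A) (g : H) :
    μ (smashMk W M (x ⊗ₜ[k] h)) (smashMk W M (y ⊗ₜ[k] g))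
      = smashMk W M (TensorProduct.map (LinearMap.mulLeft k x ∘ₗ M.act.flip y)
          (LinearMap.mulRight k g) (W.Δ h)) := by
  rw [hμ, smashMulAux_tmul]

lemma Φ_mk (Φ : Module.Dual k H →ₗ[k] Smash W M →ₗ[k] Smash W M)
    (hΦ : ∀ (a : A) (h : H) (φ : Module.Dual k H),
      Φ φ (smashMk W M (a ⊗ₜ[k] h)) = smashMk W M (a ⊗ₜ[k] coact W φ h))
    (φ : Module.Dual k H) (t : A ⊗[k] H) :
    Φ φ (smashMk W M t) = smashMk W M (LinearMap.lTensor A (coact W φ) t) := by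
  induction t using TensorProduct.induction_on with
  | zero => simp
  | tmul a h => rw [hΦ, LinearMap.lTensor_tmul]
  | add u v hu hv => simp only [map_add, hu, hv]

lemma μ_one (μ : Smash W M →ₗ[k] Smash W M →ₗ[k] Smash W M) (hμ : IsSmashMul W M μ)
    (s : Smash W M) :
    μ (smashMk W M ((1 : A) ⊗ₜ[k] (1 : H))) s = s := by
  obtain ⟨t, rfl⟩ := smashMk_surjective W M s
  induction t using TensorProduct.induction_on with
  | zero => simp
  | tmul y g =>
      rw [μ_mk W M μ hμ, LinearMap.mulLeft_one, LinearMap.id_comp]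
      exact oneMul_mk W M y g
  | add u v hu hv => simp only [map_add, hu, hv]

lemma μ_coactOne (μ : Smash W M →ₗ[k] Smash W M →ₗ[k] Smash W M) (hμ : IsSmashMul W M μ)
    (Φ : Module.Dual k H →ₗ[k] Smash W M →ₗ[k] Smash W M)
    (hΦ : ∀ (a : A) (h : H) (φ : Module.Dual k H),
      Φ φ (smashMk W M (a ⊗ₜ[k] h)) = smashMk W M (a ⊗ₜ[k] coact W φ h))
    {ξ : Module.Dual k H} (hξ : dualEt W ξ = ξ) (s : Smash W M) :
    μ (smashMk W M ((1 : A) ⊗ₜ[k] coact W ξ 1)) s = Φ ξ s := by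
  obtain ⟨t, rfl⟩ := smashMk_surjective W M s
  induction t using TensorProduct.induction_on with
  | zero => simp
  | tmul y g =>
      rw [μ_mk W M μ hμ, LinearMap.mulLeft_one, LinearMap.id_comp, hΦ]
      have hΔz : W.Δ (coact W ξ 1) = W.Δ 1 * ((1 : H) ⊗ₜ[k] coact W ξ 1) := by
        rw [Δ_coact_one W hξ, comm_one_coact]
      rw [hΔz]
      have hmap : TensorProduct.map (M.act.flip y) (LinearMap.mulRight k g)
          (W.Δ 1 * ((1 : H) ⊗ₜ[k] coact W ξ 1))
          = TensorProduct.map (M.act.flip y) (LinearMap.mulRight k (coact W ξ 1 * g))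
              (W.Δ 1) := by
        rw [W.rep_spec 1, Finset.sum_mul, map_sum, map_sum]
        refine Finset.sum_congr rfl fun p _ => ?_
        simp [Algebra.TensorProduct.tmul_mul_tmul, TensorProduct.map_tmul, mul_assoc]
      rw [hmap, oneMul_mk W M y (coact W ξ 1 * g)]
      rw [coact_eq_mulLeft W hξ]
      simp [LinearMap.mulLeft_apply]
  | add u v hu hv => simp only [map_add, hu, hv]

lemma Φ_rightA (μ : Smash W M →ₗ[k] Smash W M →ₗ[k] Smash W M) (hμ : IsSmashMul W M μ)
    (Φ : Module.Dual k H →ₗ[k] Smash W M →ₗ[k] Smash W M)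
    (hΦ : ∀ (a : A) (h : H) (φ : Module.Dual k H),
      Φ φ (smashMk W M (a ⊗ₜ[k] h)) = smashMk W M (a ⊗ₜ[k] coact W φ h))
    (φ : Module.Dual k H) (s : Smash W M) (w : A) :
    Φ φ (μ s (smashMk W M (w ⊗ₜ[k] (1 : H))))
      = μ (Φ φ s) (smashMk W M (w ⊗ₜ[k] (1 : H))) := by
  obtain ⟨t, rfl⟩ := smashMk_surjective W M s
  induction t using TensorProduct.induction_on with
  | zero => simp
  | tmul y g =>
      set G₃ : H ⊗[k] (H ⊗[k] H) →ₗ[k] Smash W M :=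
        (smashMk W M) ∘ₗ
          TensorProduct.map (LinearMap.mulLeft k y ∘ₗ M.act.flip w) LinearMap.id ∘ₗ
          LinearMap.lTensor H
            ((TensorProduct.rid k H).toLinearMap ∘ₗ LinearMap.lTensor H φ) with hG3
      have hrep := coassoc_rep W G₃ g
      have hLtot : Φ φ (μ (smashMk W M (y ⊗ₜ[k] g)) (smashMk W M (w ⊗ₜ[k] (1 : H))))
          = ∑ p ∈ W.rep g, G₃ (p.1 ⊗ₜ[k] W.Δ p.2) := by
        rw [μ_mk W M μ hμ, Φ_mk W M Φ hΦ, W.rep_spec g, map_sum, map_sum, map_sum]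
        refine Finset.sum_congr rfl fun p _ => ?_
        simp [hG3, TensorProduct.map_tmul, LinearMap.lTensor_tmul, coact, mul_one]
      have hRtot : μ (Φ φ (smashMk W M (y ⊗ₜ[k] g))) (smashMk W M (w ⊗ₜ[k] (1 : H)))
          = ∑ p ∈ W.rep g, ∑ q ∈ W.rep p.1, G₃ (q.1 ⊗ₜ[k] (q.2 ⊗ₜ[k] p.2)) := by
        rw [hΦ, coact_apply, TensorProduct.tmul_sum, map_sum, map_sum,
          LinearMap.sum_apply]
        refine Finset.sum_congr rfl fun p _ => ?_
        rw [TensorProduct.tmul_smul, map_smul, map_smul, LinearMap.smul_apply,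
          μ_mk W M μ hμ, W.rep_spec p.1, map_sum, map_sum, Finset.smul_sum]
        refine Finset.sum_congr rfl fun q _ => ?_
        simp [hG3, TensorProduct.map_tmul, LinearMap.lTensor_tmul, TensorProduct.rid_tmul,
          mul_one, TensorProduct.tmul_smul, TensorProduct.smul_tmul']
        rw [← TensorProduct.smul_tmul', map_smul]
      rw [hLtot, hRtot, hrep]
  | add u v hu hv => simp only [map_add, LinearMap.add_apply, hu, hv]

end WeakHopfAlgebra
namespace WeakHopfAlgebra

variable {k : Type*} [Field k] {H : Type*} [Ring H] [Algebra k H]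
variable {A : Type*} [Ring A] [Algebra k A]

set_option synthInstance.maxHeartbeats 1000000
set_option maxHeartbeats 1000000

variable (W : WeakHopfAlgebra k H) (M : ModuleAlgebra W A)

lemma μ_assoc (μ : Smash W M →ₗ[k] Smash W M →ₗ[k] Smash W M) (hμ : IsSmashMul W M μ)
    (a b c : Smash W M) : μ (μ a b) c = μ a (μ b c) := by
  obtain ⟨u, rfl⟩ := smashMk_surjective W M a
  obtain ⟨v, rfl⟩ := smashMk_surjective W M b
  obtain ⟨w, rfl⟩ := smashMk_surjective W M c
  induction u using TensorProduct.induction_on with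
  | zero => simp
  | add u₁ u₂ h₁ h₂ => simp only [map_add, LinearMap.add_apply, h₁, h₂]
  | tmul x h =>
  induction v using TensorProduct.induction_on with
  | zero => simp
  | add v₁ v₂ h₁ h₂ => simp only [map_add, LinearMap.add_apply, h₁, h₂]
  | tmul y g =>
  induction w using TensorProduct.induction_on with
  | zero => simp
  | add w₁ w₂ h₁ h₂ => simp only [map_add, LinearMap.add_apply, h₁, h₂]
  | tmul z f =>
  set P1 : H →ₗ[k] A := LinearMap.mulLeft k x ∘ₗ M.act.flip y with hP1
  set M₂ : H ⊗[k] H →ₗ[k] A :=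
    (LinearMap.mul' k A) ∘ₗ TensorProduct.map P1 (M.act.flip z) with hM2
  set Θ : (H ⊗[k] (H ⊗[k] H)) ⊗[k] (H ⊗[k] H) →ₗ[k] Smash W M :=
    (smashMk W M) ∘ₗ
      TensorProduct.map M₂ (LinearMap.mulRight k f) ∘ₗ
      (TensorProduct.assoc k H H H).symm.toLinearMap ∘ₗ
      LinearMap.lTensor H (TensorProduct.map (LinearMap.mul' k H) (LinearMap.mul' k H)) ∘ₗ
      LinearMap.lTensor H (TensorProduct.tensorTensorTensorComm k H H H H).toLinearMap ∘ₗ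
      (TensorProduct.assoc k H (H ⊗[k] H) (H ⊗[k] H)).toLinearMap with hΘ
  have claimA : ∀ (a : H) (t s : H ⊗[k] H),
      Θ ((a ⊗ₜ[k] t) ⊗ₜ[k] s)
        = smashMk W M (TensorProduct.map
            (LinearMap.mulLeft k (x * M.act a y) ∘ₗ M.act.flip z)
            (LinearMap.mulRight k f) (t * s)) := by
    intro a t s
    induction t using TensorProduct.induction_on with
    | zero => simp [TensorProduct.zero_tmul, TensorProduct.tmul_zero]
    | add t₁ t₂ h₁ h₂ =>
        simp only [TensorProduct.tmul_add, TensorProduct.add_tmul, add_mul, map_add, h₁, h₂]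
    | tmul p q =>
      induction s using TensorProduct.induction_on with
      | zero => simp [TensorProduct.tmul_zero]
      | add s₁ s₂ h₁ h₂ =>
          simp only [TensorProduct.tmul_add, TensorProduct.add_tmul, mul_add, map_add, h₁, h₂]
      | tmul c d =>
          simp [hΘ, hM2, hP1, TensorProduct.assoc_tmul, TensorProduct.assoc_symm_tmul,
            TensorProduct.tensorTensorTensorComm_tmul, LinearMap.lTensor_tmul,
            TensorProduct.map_tmul, LinearMap.mul'_apply,
            Algebra.TensorProduct.tmul_mul_tmul, mul_assoc]
  have claimB : ∀ (c d : H) (T : H ⊗[k] H),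
      smashMk W M (TensorProduct.map
          (LinearMap.mulLeft k x ∘ₗ M.act.flip (y * M.act c z))
          (LinearMap.mulRight k (d * f)) T)
        = Θ ((TensorProduct.assoc k H H H) ((W.Δ.rTensor H) T) ⊗ₜ[k] (c ⊗ₜ[k] d)) := by
    intro c d T
    induction T using TensorProduct.induction_on with
    | zero => simp [TensorProduct.zero_tmul]
    | add T₁ T₂ h₁ h₂ =>
        simp only [map_add, TensorProduct.add_tmul, h₁, h₂]
    | tmul a b =>
        have claimC : ∀ t : H ⊗[k] H,
            smashMk W M ((x * LinearMap.mul' k A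
                ((TensorProduct.map (M.act.flip y) (M.act.flip (M.act c z))) t))
                ⊗ₜ[k] (b * (d * f)))
              = Θ ((TensorProduct.assoc k H H H) (t ⊗ₜ[k] b) ⊗ₜ[k] (c ⊗ₜ[k] d)) := by
          intro t
          induction t using TensorProduct.induction_on with
          | zero => simp [TensorProduct.zero_tmul]
          | add t₁ t₂ h₁ h₂ =>
              simp only [map_add, mul_add, TensorProduct.add_tmul, h₁, h₂]
          | tmul r s₀ =>
              simp only [hΘ, hM2, hP1, TensorProduct.map_tmul, LinearMap.mul'_apply,
                TensorProduct.assoc_tmul, LinearMap.coe_comp, Function.comp_apply,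
                LinearEquiv.coe_coe, LinearMap.lTensor_tmul,
                TensorProduct.tensorTensorTensorComm_tmul, TensorProduct.assoc_symm_tmul,
                LinearMap.mulRight_apply, LinearMap.flip_apply, LinearMap.mulLeft_apply]
              rw [M.act_mul, mul_assoc, mul_assoc]
        have expand : M.act a (y * M.act c z) = LinearMap.mul' k A
            ((TensorProduct.map (M.act.flip y) (M.act.flip (M.act c z))) (W.Δ a)) := by
          have := M.act_algebra a y (M.act c z)
          simpa using this
        simp only [TensorProduct.map_tmul, LinearMap.coe_comp, Function.comp_apply,
          LinearMap.flip_apply, LinearMap.mulLeft_apply, LinearMap.mulRight_apply]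
        rw [expand, LinearMap.rTensor_tmul]
        exact claimC (W.Δ a)
  have hLtot : μ (μ (smashMk W M (x ⊗ₜ[k] h)) (smashMk W M (y ⊗ₜ[k] g)))
        (smashMk W M (z ⊗ₜ[k] f))
      = Θ ((W.Δ.lTensor H) (W.Δ h) ⊗ₜ[k] W.Δ g) := by
    rw [μ_mk W M μ hμ, W.rep_spec h, map_sum, map_sum, map_sum, LinearMap.sum_apply]
    have : ∀ p : H × H, p ∈ W.rep h →
        μ (smashMk W M (TensorProduct.map P1 (LinearMap.mulRight k g) (p.1 ⊗ₜ[k] p.2)))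
            (smashMk W M (z ⊗ₜ[k] f))
          = Θ ((p.1 ⊗ₜ[k] W.Δ p.2) ⊗ₜ[k] W.Δ g) := by
      intro p _
      rw [TensorProduct.map_tmul, μ_mk W M μ hμ, claimA, ← W.Δ_mul]
      rfl
    rw [Finset.sum_congr rfl this, ← map_sum, ← TensorProduct.sum_tmul]
    congr 2
    rw [map_sum]
    exact Finset.sum_congr rfl fun p _ => by rw [LinearMap.lTensor_tmul]
  have hRtot : μ (smashMk W M (x ⊗ₜ[k] h)) (μ (smashMk W M (y ⊗ₜ[k] g))
        (smashMk W M (z ⊗ₜ[k] f)))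
      = Θ ((TensorProduct.assoc k H H H) ((W.Δ.rTensor H) (W.Δ h)) ⊗ₜ[k] W.Δ g) := by
    rw [μ_mk W M μ hμ y g z f, W.rep_spec g, map_sum, map_sum, map_sum]
    have : ∀ p : H × H, p ∈ W.rep g →
        μ (smashMk W M (x ⊗ₜ[k] h))
            (smashMk W M (TensorProduct.map (LinearMap.mulLeft k y ∘ₗ M.act.flip z)
              (LinearMap.mulRight k f) (p.1 ⊗ₜ[k] p.2)))
          = Θ ((TensorProduct.assoc k H H H) ((W.Δ.rTensor H) (W.Δ h)) ⊗ₜ[k]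
              (p.1 ⊗ₜ[k] p.2)) := by
      intro p _
      rw [TensorProduct.map_tmul, μ_mk W M μ hμ]
      have h1 : (LinearMap.mulLeft k y ∘ₗ M.act.flip z) p.1 = y * M.act p.1 z := rfl
      have h2 : LinearMap.mulRight k f p.2 = p.2 * f := rfl
      rw [h1, h2, claimB]
    rw [Finset.sum_congr rfl this, ← map_sum, ← TensorProduct.tmul_sum]
  rw [hLtot, hRtot, W.coassoc]

end WeakHopfAlgebra
namespace WeakHopfAlgebra

variable {k : Type*} [Field k] {H : Type*} [Ring H] [Algebra k H]
variable {A : Type*} [Ring A] [Algebra k A]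

set_option synthInstance.maxHeartbeats 1000000
set_option maxHeartbeats 1000000

variable (W : WeakHopfAlgebra k H) (M : ModuleAlgebra W A)

lemma sum_rot4 {β γ δ δ' δ'' : Type*} [AddCommMonoid β] (S : Finset γ) (P : Finset δ)
    (Qf : δ → Finset δ') (L : Finset δ'') (f : γ → δ → δ' → δ'' → β) :
    ∑ r ∈ S, ∑ p ∈ P, ∑ q ∈ Qf p, ∑ l ∈ L, f r p q l
      = ∑ p ∈ P, ∑ q ∈ Qf p, ∑ l ∈ L, ∑ r ∈ S, f r p q l := by
  rw [Finset.sum_comm]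
  refine Finset.sum_congr rfl fun p _ => ?_
  rw [Finset.sum_comm]
  exact Finset.sum_congr rfl fun q _ => Finset.sum_comm

lemma sum_rot3d {β γ δ δ' : Type*} [AddCommMonoid β] (L : Finset γ) (P : Finset δ)
    (Qf : δ → Finset δ') (f : γ → δ → δ' → β) :
    ∑ l ∈ L, ∑ p ∈ P, ∑ q ∈ Qf p, f l p q
      = ∑ p ∈ P, ∑ q ∈ Qf p, ∑ l ∈ L, f l p q := by
  rw [Finset.sum_comm]
  exact Finset.sum_congr rfl fun p _ => Finset.sum_comm

/-- The bilinearized double action `(φ₁ ⊗ φ₂) ↦ (v, w) ↦ μ (Φ φ₁ v) (Φ φ₂ w)`. -/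
noncomputable def NN (μ : Smash W M →ₗ[k] Smash W M →ₗ[k] Smash W M)
    (Φ : Module.Dual k H →ₗ[k] Smash W M →ₗ[k] Smash W M) :
    Module.Dual k H ⊗[k] Module.Dual k H →ₗ[k]
      Smash W M →ₗ[k] Smash W M →ₗ[k] Smash W M :=
  TensorProduct.lift <| LinearMap.mk₂ k (fun φ₁ φ₂ => μ.compl₁₂ (Φ φ₁) (Φ φ₂))
    (fun a b c => by ext s t; simp [LinearMap.compl₁₂_apply, map_add])
    (fun c a b => by ext s t; simp [LinearMap.compl₁₂_apply, map_smul])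
    (fun a b c => by ext s t; simp [LinearMap.compl₁₂_apply, map_add])
    (fun c a b => by ext s t; simp [LinearMap.compl₁₂_apply, map_smul])

lemma NN_tmul (μ : Smash W M →ₗ[k] Smash W M →ₗ[k] Smash W M)
    (Φ : Module.Dual k H →ₗ[k] Smash W M →ₗ[k] Smash W M)
    (φ₁ φ₂ : Module.Dual k H) (v w : Smash W M) :
    NN W M μ Φ (φ₁ ⊗ₜ[k] φ₂) v w = μ (Φ φ₁ v) (Φ φ₂ w) := by
  simp [NN, LinearMap.compl₁₂_apply]

lemma Φ_mk_sum (Φ : Module.Dual k H →ₗ[k] Smash W M →ₗ[k] Smash W M)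
    (hΦ : ∀ (a : A) (h : H) (φ : Module.Dual k H),
      Φ φ (smashMk W M (a ⊗ₜ[k] h)) = smashMk W M (a ⊗ₜ[k] coact W φ h))
    (φ' : Module.Dual k H) (y : A) (g : H) :
    Φ φ' (smashMk W M (y ⊗ₜ[k] g))
      = ∑ p ∈ W.rep g, φ' p.2 • smashMk W M (y ⊗ₜ[k] p.1) := by
  rw [hΦ, coact_apply, TensorProduct.tmul_sum, map_sum]
  exact Finset.sum_congr rfl fun p _ => by rw [TensorProduct.tmul_smul, map_smul]

lemma μ_mk_sum (μ : Smash W M →ₗ[k] Smash W M →ₗ[k] Smash W M) (hμ : IsSmashMul W M μ)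
    (y : A) (a : H) (z : A) (b : H) :
    μ (smashMk W M (y ⊗ₜ[k] a)) (smashMk W M (z ⊗ₜ[k] b))
      = ∑ q ∈ W.rep a, smashMk W M ((y * M.act q.1 z) ⊗ₜ[k] (q.2 * b)) := by
  rw [μ_mk W M μ hμ, W.rep_spec a, map_sum, map_sum]
  exact Finset.sum_congr rfl fun q _ => by
    simp [TensorProduct.map_tmul]

lemma bilin_sum {X Y Z : Type*} [AddCommGroup X] [AddCommGroup Y] [AddCommGroup Z]
    [Module k X] [Module k Y] [Module k Z] (B : X →ₗ[k] Y →ₗ[k] Z)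
    {γ δ : Type*} (s : Finset γ) (t : Finset δ) (c : γ → k) (d : δ → k)
    (vf : γ → X) (wf : δ → Y) :
    B (∑ p ∈ s, c p • vf p) (∑ l ∈ t, d l • wf l)
      = ∑ p ∈ s, ∑ l ∈ t, (c p * d l) • B (vf p) (wf l) := by
  have h1 : B (∑ p ∈ s, c p • vf p) = ∑ p ∈ s, c p • B (vf p) := by
    rw [map_sum]
    exact Finset.sum_congr rfl fun p _ => map_smul _ _ _
  rw [h1, LinearMap.sum_apply]
  refine Finset.sum_congr rfl fun p _ => ?_
  rw [LinearMap.smul_apply, map_sum, Finset.smul_sum]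
  refine Finset.sum_congr rfl fun l _ => ?_
  rw [map_smul, smul_smul]

lemma Φ_measure [FiniteDimensional k H]
    (μ : Smash W M →ₗ[k] Smash W M →ₗ[k] Smash W M) (hμ : IsSmashMul W M μ)
    (Φ : Module.Dual k H →ₗ[k] Smash W M →ₗ[k] Smash W M)
    (hΦ : ∀ (a : A) (h : H) (φ : Module.Dual k H),
      Φ φ (smashMk W M (a ⊗ₜ[k] h)) = smashMk W M (a ⊗ₜ[k] coact W φ h))
    (φ : Module.Dual k H) (v w : Smash W M) :
    Φ φ (μ v w) = NN W M μ Φ (comulD W φ) v w := by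
  obtain ⟨V, rfl⟩ := smashMk_surjective W M v
  obtain ⟨U, rfl⟩ := smashMk_surjective W M w
  induction V using TensorProduct.induction_on with
  | zero => simp
  | add V₁ V₂ h₁ h₂ => simp only [map_add, LinearMap.add_apply, h₁, h₂]
  | tmul y g =>
  induction U using TensorProduct.induction_on with
  | zero => simp
  | add U₁ U₂ h₁ h₂ => simp only [map_add, LinearMap.add_apply, h₁, h₂]
  | tmul z f =>
  obtain ⟨S, hS⟩ := TensorProduct.exists_finset (R := k) (comulD W φ)
  have hpair : ∀ a b : H, ∑ r ∈ S, r.1 a * r.2 b = φ (a * b) := by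
    intro a b
    have h0 := comulD_eval W φ a b
    rw [hS, map_sum, LinearMap.sum_apply] at h0
    rw [← h0]
    exact Finset.sum_congr rfl fun r _ => by rw [TensorProduct.dualDistrib_apply]
  have hR : NN W M μ Φ (comulD W φ) (smashMk W M (y ⊗ₜ[k] g)) (smashMk W M (z ⊗ₜ[k] f))
      = ∑ p ∈ W.rep g, ∑ q ∈ W.rep p.1, ∑ l ∈ W.rep f,
          φ (p.2 * l.2) • smashMk W M ((y * M.act q.1 z) ⊗ₜ[k] (q.2 * l.1)) := by
    rw [hS, map_sum, LinearMap.sum_apply, LinearMap.sum_apply]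
    have expand : ∀ r : Module.Dual k H × Module.Dual k H,
        NN W M μ Φ (r.1 ⊗ₜ[k] r.2) (smashMk W M (y ⊗ₜ[k] g)) (smashMk W M (z ⊗ₜ[k] f))
          = ∑ p ∈ W.rep g, ∑ q ∈ W.rep p.1, ∑ l ∈ W.rep f,
              (r.1 p.2 * r.2 l.2) • smashMk W M ((y * M.act q.1 z) ⊗ₜ[k] (q.2 * l.1)) := by
      intro r
      rw [NN_tmul, Φ_mk_sum W M Φ hΦ, Φ_mk_sum W M Φ hΦ,
        bilin_sum μ (W.rep g) (W.rep f) (fun p => r.1 p.2) (fun l => r.2 l.2)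
          (fun p => smashMk W M (y ⊗ₜ[k] p.1)) (fun l => smashMk W M (z ⊗ₜ[k] l.1))]
      refine Finset.sum_congr rfl fun p _ => ?_
      rw [show ∑ l ∈ W.rep f, (r.1 p.2 * r.2 l.2) •
            μ (smashMk W M (y ⊗ₜ[k] p.1)) (smashMk W M (z ⊗ₜ[k] l.1))
          = ∑ l ∈ W.rep f, ∑ q ∈ W.rep p.1, (r.1 p.2 * r.2 l.2) •
              smashMk W M ((y * M.act q.1 z) ⊗ₜ[k] (q.2 * l.1)) from
        Finset.sum_congr rfl fun l _ => by
          rw [μ_mk_sum W M μ hμ, Finset.smul_sum]]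
      exact Finset.sum_comm
    rw [Finset.sum_congr rfl fun r _ => expand r,
      sum_rot4 S (W.rep g) (fun p => W.rep p.1) (W.rep f)]
    refine Finset.sum_congr rfl fun p _ => Finset.sum_congr rfl fun q _ =>
      Finset.sum_congr rfl fun l _ => ?_
    rw [← Finset.sum_smul, hpair]
  have hL : Φ φ (μ (smashMk W M (y ⊗ₜ[k] g)) (smashMk W M (z ⊗ₜ[k] f)))
      = ∑ p ∈ W.rep g, ∑ q ∈ W.rep p.1, ∑ l ∈ W.rep f,
          φ (p.2 * l.2) • smashMk W M ((y * M.act q.1 z) ⊗ₜ[k] (q.2 * l.1)) := by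
    set Gl : H × H → (H ⊗[k] (H ⊗[k] H) →ₗ[k] Smash W M) := fun l =>
      (smashMk W M) ∘ₗ
        TensorProduct.map (LinearMap.mulLeft k y ∘ₗ M.act.flip z)
          (LinearMap.mulRight k l.1) ∘ₗ
        LinearMap.lTensor H ((TensorProduct.rid k H).toLinearMap ∘ₗ
          LinearMap.lTensor H (φ ∘ₗ LinearMap.mulRight k l.2)) with hGl
    have hGl_tmul : ∀ (l : H × H) (a b c : H),
        Gl l (a ⊗ₜ[k] (b ⊗ₜ[k] c))
          = φ (c * l.2) • smashMk W M ((y * M.act a z) ⊗ₜ[k] (b * l.1)) := by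
      intro l a b c
      simp [hGl, TensorProduct.map_tmul, LinearMap.lTensor_tmul, TensorProduct.rid_tmul,
        TensorProduct.tmul_smul]
    have step1 : Φ φ (μ (smashMk W M (y ⊗ₜ[k] g)) (smashMk W M (z ⊗ₜ[k] f)))
        = ∑ l ∈ W.rep f, ∑ p ∈ W.rep g, Gl l (p.1 ⊗ₜ[k] W.Δ p.2) := by
      rw [μ_mk_sum W M μ hμ, map_sum, Finset.sum_comm]
      refine Finset.sum_congr rfl fun p _ => ?_
      rw [Φ_mk W M Φ hΦ, LinearMap.lTensor_tmul]
      have hco : coact W φ (p.2 * f)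
          = ∑ l ∈ W.rep f, ∑ q ∈ W.rep p.2, φ (q.2 * l.2) • (q.1 * l.1) := by
        rw [coact]
        simp only [LinearMap.coe_comp, Function.comp_apply, LinearEquiv.coe_coe]
        rw [W.Δ_mul, W.rep_spec p.2, W.rep_spec f, Finset.sum_mul, Finset.sum_comm]
        rw [map_sum, map_sum]
        refine Finset.sum_congr rfl fun l _ => ?_
        rw [Finset.mul_sum, map_sum, map_sum]
        refine Finset.sum_congr rfl fun q _ => ?_
        simp [Algebra.TensorProduct.tmul_mul_tmul, LinearMap.lTensor_tmul,
          TensorProduct.rid_tmul]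
      rw [hco, TensorProduct.tmul_sum, map_sum]
      refine Finset.sum_congr rfl fun l _ => ?_
      rw [W.rep_spec p.2, TensorProduct.tmul_sum, TensorProduct.tmul_sum, map_sum, map_sum]
      refine Finset.sum_congr rfl fun q _ => ?_
      rw [hGl_tmul, TensorProduct.tmul_smul, map_smul]
    have step2 : ∀ l : H × H, ∑ p ∈ W.rep g, Gl l (p.1 ⊗ₜ[k] W.Δ p.2)
        = ∑ p ∈ W.rep g, ∑ q ∈ W.rep p.1, Gl l (q.1 ⊗ₜ[k] (q.2 ⊗ₜ[k] p.2)) :=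
      fun l => (coassoc_rep W (Gl l) g).symm
    rw [step1, Finset.sum_congr rfl fun l _ => step2 l,
      sum_rot3d (W.rep f) (W.rep g) (fun p => W.rep p.1)]
    refine Finset.sum_congr rfl fun p _ => Finset.sum_congr rfl fun q _ =>
      Finset.sum_congr rfl fun l _ => ?_
    rw [hGl_tmul]
  rw [hL, hR]

end WeakHopfAlgebra
namespace WeakHopfAlgebra

variable {k : Type*} [Field k] {H : Type*} [Ring H] [Algebra k H]
variable {A : Type*} [Ring A] [Algebra k A]

set_option synthInstance.maxHeartbeats 1000000
set_option maxHeartbeats 1000000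

variable (W : WeakHopfAlgebra k H) (M : ModuleAlgebra W A)

lemma Φ_dmul (Φ : Module.Dual k H →ₗ[k] Smash W M →ₗ[k] Smash W M)
    (hΦ : ∀ (a : A) (h : H) (φ : Module.Dual k H),
      Φ φ (smashMk W M (a ⊗ₜ[k] h)) = smashMk W M (a ⊗ₜ[k] coact W φ h))
    (φ ψ : Module.Dual k H) (s : Smash W M) :
    Φ (dmul W φ ψ) s = Φ φ (Φ ψ s) := by
  obtain ⟨t, rfl⟩ := smashMk_surjective W M s
  rw [Φ_mk W M Φ hΦ, Φ_mk W M Φ hΦ, Φ_mk W M Φ hΦ, coact_dmul, LinearMap.lTensor_comp,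
    LinearMap.comp_apply]

lemma dmulL_apply (φ ψ : Module.Dual k H) :
    dmulL W φ ψ = dmul W φ ψ := rfl

end WeakHopfAlgebra
open WeakHopfAlgebra TensorProduct in
/-- The map `α : (A#H)#H^* → End((A#H)_A)`, `α((x#h)#φ)(y#g) = (x#h)(y#(φ⇀g))`,
is a well-defined homomorphism of unital algebras into the algebra of right
`A`-module endomorphisms of `A#H`. -/
theorem alpha_algebra_hom {k : Type*} [Field k] {H : Type*} [Ring H] [Algebra k H]
    [FiniteDimensional k H] {A : Type*} [Ring A] [Algebra k A]
    (W : WeakHopfAlgebra k H) (M : ModuleAlgebra W A)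
    (μ : Smash W M →ₗ[k] Smash W M →ₗ[k] Smash W M) (hμ : IsSmashMul W M μ)
    (Φ : Module.Dual k H →ₗ[k] Smash W M →ₗ[k] Smash W M)
    (hΦ : ∀ (a : A) (h : H) (φ : Module.Dual k H),
      Φ φ (smashMk W M (a ⊗ₜ[k] h)) = smashMk W M (a ⊗ₜ[k] coact W φ h)) :
    ∃ αmap : Smash2 W M μ →ₗ[k] (Smash W M →ₗ[k] Smash W M),
      -- the defining formula
      (∀ (x : A) (h : H) (φ : Module.Dual k H) (y : A) (g : H),
        αmap (smashMk2 W M μ (smashMk W M (x ⊗ₜ[k] h) ⊗ₜ[k] φ)) (smashMk W M (y ⊗ₜ[k] g)) =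
          μ (smashMk W M (x ⊗ₜ[k] h)) (smashMk W M (y ⊗ₜ[k] coact W φ g))) ∧
      -- values are right A-module endomorphisms
      (∀ t : Smash2 W M μ, RightALinear W M μ (αmap t)) ∧
      -- α is multiplicative
      (∀ μ₂ : Smash2 W M μ →ₗ[k] Smash2 W M μ →ₗ[k] Smash2 W M μ,
        IsSmashMul2 W M μ Φ μ₂ →
          ∀ s t : Smash2 W M μ, αmap (μ₂ s t) = (αmap s) ∘ₗ (αmap t)) ∧
      -- α is unital
      αmap (smashMk2 W M μ (smashOne W M ⊗ₜ[k] W.ε)) = LinearMap.id := by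
  classical
  set B : Smash W M ⊗[k] Module.Dual k H →ₗ[k] (Smash W M →ₗ[k] Smash W M) :=
    TensorProduct.lift (LinearMap.mk₂ k (fun u φ => μ u ∘ₗ Φ φ)
      (fun u u' φ => by ext s; simp)
      (fun c u φ => by ext s; simp)
      (fun u φ φ' => by ext s; simp)
      (fun c u φ => by ext s; simp)) with hB
  have hBt : ∀ (u : Smash W M) (φ : Module.Dual k H), B (u ⊗ₜ[k] φ) = μ u ∘ₗ Φ φ := by
    intro u φ
    simp [hB]
  have hker : smashRel2 W M μ ≤ LinearMap.ker B := by
    rw [smashRel2]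
    rw [Submodule.span_le]
    rintro w ⟨u, ξ, φ, hξ, rfl⟩
    simp only [SetLike.mem_coe, LinearMap.mem_ker, map_sub, hBt]
    rw [sub_eq_zero]
    apply LinearMap.ext; intro s
    simp only [LinearMap.coe_comp, Function.comp_apply]
    rw [μ_assoc W M μ hμ, μ_coactOne W M μ hμ Φ hΦ hξ (Φ φ s),
      ← Φ_dmul W M Φ hΦ ξ φ s]
  set αm : Smash2 W M μ →ₗ[k] (Smash W M →ₗ[k] Smash W M) :=
    (smashRel2 W M μ).liftQ B hker with hαmdef
  have hαm : ∀ ρ : Smash W M ⊗[k] Module.Dual k H, αm (smashMk2 W M μ ρ) = B ρ :=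
    fun ρ => rfl
  refine ⟨αm, ?_, ?_, ?_, ?_⟩
  · intro x h φ y g
    rw [hαm, hBt]
    simp only [LinearMap.coe_comp, Function.comp_apply]
    rw [hΦ]
  · intro t
    obtain ⟨τ, rfl⟩ : ∃ τ, smashMk2 W M μ τ = t := (smashRel2 W M μ).mkQ_surjective t
    induction τ using TensorProduct.induction_on with
    | zero =>
        intro s w
        simp only [map_zero, LinearMap.zero_apply]
    | tmul u φ =>
        intro s w
        rw [hαm, hBt]
        simp only [LinearMap.coe_comp, Function.comp_apply]
        rw [Φ_rightA W M μ hμ Φ hΦ, ← μ_assoc W M μ hμ]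
    | add τ₁ τ₂ h₁ h₂ =>
        intro s w
        simp only [map_add, LinearMap.add_apply, h₁ s w, h₂ s w]
  · intro μ₂ hμ₂ s t
    obtain ⟨σ, rfl⟩ : ∃ σ, smashMk2 W M μ σ = s := (smashRel2 W M μ).mkQ_surjective s
    obtain ⟨τ, rfl⟩ : ∃ τ, smashMk2 W M μ τ = t := (smashRel2 W M μ).mkQ_surjective t
    induction σ using TensorProduct.induction_on with
    | zero => simp only [map_zero, LinearMap.zero_apply, map_zero, LinearMap.zero_comp]
    | add σ₁ σ₂ h₁ h₂ =>
        simp only [map_add, LinearMap.add_apply, LinearMap.add_comp, h₁, h₂]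
    | tmul u φ =>
      induction τ using TensorProduct.induction_on with
      | zero => simp only [map_zero, LinearMap.zero_apply, map_zero, LinearMap.comp_zero]
      | add τ₁ τ₂ h₁ h₂ =>
          simp only [map_add, LinearMap.add_apply, LinearMap.comp_add, h₁, h₂]
      | tmul v ψ =>
        rw [hμ₂ u v φ ψ, hαm, hαm, hαm, hBt, hBt]
        apply LinearMap.ext; intro s
        obtain ⟨S, hS⟩ := TensorProduct.exists_finset (R := k) (comulD W φ)
        rw [hS, map_sum, map_sum, LinearMap.sum_apply]
        have expand : ∀ r : Module.Dual k H × Module.Dual k H,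
            B (TensorProduct.map ((μ u) ∘ₗ (Φ.flip v)) ((dmulL W).flip ψ)
                (r.1 ⊗ₜ[k] r.2)) s
              = μ u (NN W M μ Φ (r.1 ⊗ₜ[k] r.2) v (Φ ψ s)) := by
          intro r
          rw [TensorProduct.map_tmul, hBt]
          simp only [LinearMap.coe_comp, Function.comp_apply, LinearMap.flip_apply]
          rw [dmulL_apply, Φ_dmul W M Φ hΦ, μ_assoc W M μ hμ, NN_tmul]
        rw [Finset.sum_congr rfl fun r _ => expand r, ← map_sum]
        have collapse : ∑ r ∈ S, NN W M μ Φ (r.1 ⊗ₜ[k] r.2) v (Φ ψ s)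
            = NN W M μ Φ (comulD W φ) v (Φ ψ s) := by
          rw [hS, map_sum, LinearMap.sum_apply, LinearMap.sum_apply]
        rw [collapse, ← Φ_measure W M μ hμ Φ hΦ]
        simp only [LinearMap.coe_comp, Function.comp_apply]
  · rw [hαm, hBt]
    apply LinearMap.ext; intro s
    simp only [LinearMap.coe_comp, Function.comp_apply, LinearMap.id_coe, id_eq]
    obtain ⟨t, rfl⟩ := smashMk_surjective W M s
    rw [Φ_mk W M Φ hΦ, coact_ε, LinearMap.lTensor_id, LinearMap.id_coe, id_eq]
    exact μ_one W M μ hμ _
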